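/- Let Ω ⊆ ℂ be a bounded open set, let z ∈ Ω, let c ∈ ℂ, and let B = !![z, 0; c, z]. Suppose that ‖r(B)‖ ≤ 1 for every admissible rational function r = p/q for Ω with ‖r‖_Ω ≤ 1 and p.eval z = 0 (equivalently, r(z) = 0). Then ‖r(B)‖ ≤ 1 for every admissible rational function r for Ω with ‖r‖_Ω ≤ 1. -/

import Mathlib

/-!
Write `r = p/q` and `a = r(z)`. The matrix `r(B)` is the lower-triangular Toeplitz matrix
`!![a, 0; c r'(z), a]`, and such a matrix has norm at most one as soon as
`|c r'(z)| ≤ 1 - |a|²`. To get this bound, compose `μ r` (for `0 ≤ μ < 1`) with the disc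
automorphism `w ↦ (w - μa) / (1 - conj (μa) w)`; since `|μa| < 1` even when `|a| = 1`, the result
is again admissible with sup norm at most one, vanishes at `z`, and has derivative
`μ r'(z) / (1 - μ²|a|²)` there. The hypothesis bounds the lower-left entry of its value at `B`,
giving `μ |c r'(z)| ≤ 1 - μ²|a|²`; let `μ → 1`.
-/

/-- The operator norm (on the Euclidean space `ℂ²`) of the value of the rational
function `p/q` at the `2 × 2` matrix `B`. -/
noncomputable def ratNormAt (B : Matrix (Fin 2) (Fin 2) ℂ) (p q : Polynomial ℂ) : ℝ :=
  ‖Matrix.toEuclideanCLM (𝕜 := ℂ) (Polynomial.aeval B p * (Polynomial.aeval B q)⁻¹)‖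

open Polynomial Matrix Set ComplexConjugate

section LowerToeplitz

variable {R : Type*} [CommRing R]

theorem lowerToeplitz_mul (a b x y : R) :
    !![a, 0; b, a] * !![x, 0; y, x] = !![a * x, 0; b * x + a * y, a * x] := by
  ext i j; fin_cases i <;> fin_cases j <;> simp [mul_apply, Fin.sum_univ_two]

theorem aeval_lowerToeplitz (z c : R) (p : R[X]) :
    aeval !![z, 0; c, z] p = !![p.eval z, 0; c * p.derivative.eval z, p.eval z] := by
  induction p using Polynomial.induction_on with
  | C a =>
    ext i j; fin_cases i <;> fin_cases j <;> simp [Algebra.algebraMap_eq_smul_one]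
  | add p q hp hq =>
    ext i j; fin_cases i <;> fin_cases j <;> simp [hp, hq]; ring
  | monomial n a ih =>
    rw [pow_succ, ← mul_assoc, map_mul, ih, aeval_X, lowerToeplitz_mul]
    ext i j; fin_cases i <;> fin_cases j <;> simp [derivative_mul]; ring

theorem inv_lowerToeplitz {K : Type*} [Field K] {x : K} (hx : x ≠ 0) (y : K) :
    (!![x, 0; y, x])⁻¹ = !![x⁻¹, 0; -y / x ^ 2, x⁻¹] := by
  refine inv_eq_right_inv ?_
  rw [lowerToeplitz_mul]
  ext i j; fin_cases i <;> fin_cases j <;> simp [hx]; field_simp; ring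

end LowerToeplitz

section RatDeriv

variable {K : Type*} [Field K]

noncomputable def ratDeriv (p q : K[X]) (z : K) : K :=
  (p.derivative.eval z * q.eval z - p.eval z * q.derivative.eval z) / q.eval z ^ 2

theorem ratDeriv_C_mul (μ : K) (p q : K[X]) (z : K) :
    ratDeriv (C μ * p) q z = μ * ratDeriv p q z := by
  simp only [ratDeriv, derivative_C_mul, eval_mul, eval_C]; ring

/-- `(p - C b * q) / (q - C b' * p)` is `p / q` followed by `w ↦ (w - b) / (1 - b' w)`; this is
the chain rule at a point where `p / q` takes the value `b`. -/
theorem ratDeriv_sub_C_mul {p q : K[X]} {z b b' : K} (hpq : p.eval z = b * q.eval z)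
    (hq : q.eval z ≠ 0) :
    ratDeriv (p - C b * q) (q - C b' * p) z = ratDeriv p q z / (1 - b' * b) := by
  simp only [ratDeriv, derivative_sub, derivative_C_mul, eval_sub, eval_mul, eval_C, hpq]
  rw [show q.eval z - b' * (b * q.eval z) = q.eval z * (1 - b' * b) by ring, sub_self, zero_mul,
    sub_zero]
  field_simp

theorem aeval_mul_inv_aeval_lowerToeplitz (z c : K) {p q : K[X]} (hq : q.eval z ≠ 0) :
    aeval !![z, 0; c, z] p * (aeval !![z, 0; c, z] q)⁻¹ =
      !![p.eval z / q.eval z, 0; c * ratDeriv p q z, p.eval z / q.eval z] := by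
  rw [aeval_lowerToeplitz, aeval_lowerToeplitz, inv_lowerToeplitz hq, lowerToeplitz_mul]
  ext i j; fin_cases i <;> fin_cases j <;> simp [ratDeriv, div_eq_mul_inv]
  field_simp
  ring

end RatDeriv

section OperatorNorm

variable {𝕜 : Type*} [RCLike 𝕜]

theorem norm_entry_le_norm_toEuclideanCLM {n : Type*} [Fintype n] [DecidableEq n]
    (M : Matrix n n 𝕜) (i j : n) : ‖M i j‖ ≤ ‖toEuclideanCLM (𝕜 := 𝕜) M‖ := by
  set T := toEuclideanCLM (n := n) (𝕜 := 𝕜) M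
  calc ‖M i j‖ = ‖T (WithLp.toLp 2 (Pi.single j 1)) i‖ := by rw [toEuclideanCLM_toLp]; simp
    _ ≤ ‖T (WithLp.toLp 2 (Pi.single j 1))‖ := PiLp.norm_apply_le _ _
    _ ≤ ‖T‖ := by grw [T.le_opNorm]; simp

theorem norm_toEuclideanCLM_lowerToeplitz_le_one {a t : 𝕜} (ht : ‖t‖ ≤ 1 - ‖a‖ ^ 2) :
    ‖toEuclideanCLM (𝕜 := 𝕜) !![a, 0; t, a]‖ ≤ 1 := by
  refine ContinuousLinearMap.opNorm_le_bound _ zero_le_one fun v => ?_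
  refine (sq_le_sq₀ (norm_nonneg _) (by positivity)).mp ?_
  simp only [EuclideanSpace.norm_sq_eq, Fin.sum_univ_two, ofLp_toEuclideanCLM, one_mul, mulVec,
    dotProduct, of_apply, cons_val', cons_val_zero, cons_val_one, empty_val', cons_val_fin_one,
    zero_mul, add_zero, norm_mul]
  have h : ‖t * v 0 + a * v 1‖ ≤ (1 - ‖a‖ ^ 2) * ‖v 0‖ + ‖a‖ * ‖v 1‖ := by
    grw [norm_add_le, norm_mul, norm_mul, ht]
  -- squaring `h`, its cross term is absorbed by `(1 - |a|²) (|a| x - y)² ≥ 0`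
  nlinarith [pow_le_pow_left₀ (norm_nonneg _) h 2, norm_nonneg a, norm_nonneg (v 0),
    norm_nonneg (v 1), mul_nonneg ((norm_nonneg t).trans ht) (sq_nonneg (‖a‖ * ‖v 0‖ - ‖v 1‖))]

theorem norm_mul_ratDeriv_le_ratNormAt (z c : ℂ) {p q : ℂ[X]} (hq : q.eval z ≠ 0) :
    ‖c * ratDeriv p q z‖ ≤ ratNormAt !![z, 0; c, z] p q := by
  rw [ratNormAt, aeval_mul_inv_aeval_lowerToeplitz z c hq]
  exact norm_entry_le_norm_toEuclideanCLM !![_, 0; _, _] 1 0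

theorem ratNormAt_lowerToeplitz_le_one {z c : ℂ} {p q : ℂ[X]} (hq : q.eval z ≠ 0)
    (h : ‖c * ratDeriv p q z‖ ≤ 1 - ‖p.eval z / q.eval z‖ ^ 2) :
    ratNormAt !![z, 0; c, z] p q ≤ 1 := by
  rw [ratNormAt, aeval_mul_inv_aeval_lowerToeplitz z c hq]
  exact norm_toEuclideanCLM_lowerToeplitz_le_one h

end OperatorNorm

theorem sub_conj_mul_ne_zero {u v b : ℂ} (hb : ‖b‖ < 1) (huv : ‖u‖ ≤ ‖v‖) (hv : v ≠ 0) :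
    v - conj b * u ≠ 0 := by
  refine sub_ne_zero.2 (ne_of_apply_ne norm ?_)
  rw [norm_mul, Complex.norm_conj]
  nlinarith [mul_le_mul_of_nonneg_left huv (norm_nonneg b),
    mul_lt_mul_of_pos_right hb (norm_pos_iff.2 hv)]

theorem norm_sub_mul_le_norm_sub_conj_mul {u v b : ℂ} (hb : ‖b‖ ≤ 1) (huv : ‖u‖ ≤ ‖v‖) :
    ‖u - b * v‖ ≤ ‖v - conj b * u‖ := by
  have key : ‖v - conj b * u‖ ^ 2 - ‖u - b * v‖ ^ 2 = (1 - ‖b‖ ^ 2) * (‖v‖ ^ 2 - ‖u‖ ^ 2) := by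
    simp only [← Complex.normSq_eq_norm_sq, Complex.normSq_apply, Complex.sub_re, Complex.sub_im,
      Complex.mul_re, Complex.mul_im, Complex.conj_re, Complex.conj_im]
    ring
  refine (sq_le_sq₀ (norm_nonneg _) (norm_nonneg _)).1 (sub_nonneg.1 ?_)
  rw [key]
  exact mul_nonneg (by nlinarith [norm_nonneg b]) (by nlinarith [norm_nonneg u])

theorem le_one_sub_of_forall_mul_le {k A : ℝ} (h : ∀ μ ∈ Ico (0 : ℝ) 1, μ * k ≤ 1 - μ ^ 2 * A) :
    k ≤ 1 - A := by
  have hcl : Icc (0 : ℝ) 1 ⊆ {μ | μ * k ≤ 1 - μ ^ 2 * A} := by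
    rw [← closure_Ico zero_ne_one]
    exact closure_minimal h (isClosed_le (by fun_prop) (by fun_prop))
  simpa using hcl (right_mem_Icc.2 zero_le_one)

theorem norm_mul_ratDeriv_le_one_sub_sq {s : Set ℂ} {z c : ℂ} (hz : z ∈ s)
    (hyp : ∀ p q : ℂ[X], (∀ w ∈ s, q.eval w ≠ 0) → (∀ w ∈ s, ‖p.eval w / q.eval w‖ ≤ 1) →
      p.eval z = 0 → ‖c * ratDeriv p q z‖ ≤ 1)
    {p q : ℂ[X]} (hq : ∀ w ∈ s, q.eval w ≠ 0) (hpq : ∀ w ∈ s, ‖p.eval w / q.eval w‖ ≤ 1) :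
    ‖c * ratDeriv p q z‖ ≤ 1 - ‖p.eval z / q.eval z‖ ^ 2 := by
  set a := p.eval z / q.eval z
  have ha : ‖a‖ ≤ 1 := hpq z hz
  have hle (w) (hw : w ∈ s) : ‖p.eval w‖ ≤ ‖q.eval w‖ := by
    simpa [norm_div, div_le_one (norm_pos_iff.2 (hq w hw))] using hpq w hw
  refine le_one_sub_of_forall_mul_le fun μ ⟨hμ0, hμ1⟩ => ?_
  set b : ℂ := μ * a
  have hbnorm : ‖b‖ = μ * ‖a‖ := by rw [norm_mul, Complex.norm_real, Real.norm_of_nonneg hμ0]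
  have hb : ‖b‖ < 1 := by rw [hbnorm]; nlinarith [norm_nonneg a]
  have hμp (w) (hw : w ∈ s) : ‖(C (μ : ℂ) * p).eval w‖ ≤ ‖q.eval w‖ := by
    rw [eval_mul, eval_C, norm_mul, Complex.norm_real, Real.norm_of_nonneg hμ0]
    nlinarith [hle w hw, norm_nonneg (p.eval w)]
  set P := C (μ : ℂ) * p - C b * q
  set Q := q - C (conj b) * (C (μ : ℂ) * p)
  have hQ (w) (hw : w ∈ s) : Q.eval w ≠ 0 := by
    simpa [Q] using sub_conj_mul_ne_zero hb (hμp w hw) (hq w hw)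
  have hPQ (w) (hw : w ∈ s) : ‖P.eval w / Q.eval w‖ ≤ 1 := by
    rw [norm_div, div_le_one (norm_pos_iff.2 (hQ w hw))]
    simpa [P, Q] using norm_sub_mul_le_norm_sub_conj_mul hb.le (hμp w hw)
  have hμpz : (C (μ : ℂ) * p).eval z = b * q.eval z := by
    simp only [b, a, eval_mul, eval_C, mul_assoc, div_mul_cancel₀ _ (hq z hz)]
  have hPz : P.eval z = 0 := by simp [P, ← hμpz]
  have hbb : conj b * b = ((μ ^ 2 * ‖a‖ ^ 2 : ℝ) : ℂ) := by
    rw [mul_comm, Complex.mul_conj, Complex.normSq_eq_norm_sq, hbnorm, mul_pow]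
  have hden : 0 < 1 - μ ^ 2 * ‖a‖ ^ 2 := by
    rw [← mul_pow, ← hbnorm]; nlinarith [norm_nonneg b]
  have h := hyp P Q hQ hPQ hPz
  rw [ratDeriv_sub_C_mul hμpz (hq z hz), ratDeriv_C_mul, hbb, ← Complex.ofReal_one,
    ← Complex.ofReal_sub, norm_mul, norm_div, norm_mul, Complex.norm_real, Complex.norm_real,
    Real.norm_of_nonneg hμ0, Real.norm_of_nonneg hden.le, mul_div_assoc', div_le_one hden] at h
  rwa [norm_mul, mul_left_comm]

theorem stmt_8_general (Ω : Set ℂ)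
    (z : ℂ) (hzΩ : z ∈ Ω) (c : ℂ)
    (B : Matrix (Fin 2) (Fin 2) ℂ) (hB : B = !![z, 0; c, z])
    (hyp : ∀ p q : Polynomial ℂ,
      (∀ w ∈ closure Ω, q.eval w ≠ 0) →
      (∀ w ∈ closure Ω, ‖p.eval w / q.eval w‖ ≤ 1) →
      p.eval z = 0 → ratNormAt B p q ≤ 1) :
    ∀ p q : Polynomial ℂ,
      (∀ w ∈ closure Ω, q.eval w ≠ 0) →
      (∀ w ∈ closure Ω, ‖p.eval w / q.eval w‖ ≤ 1) →
      ratNormAt B p q ≤ 1 := by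
  subst hB
  have hz : z ∈ closure Ω := subset_closure hzΩ
  intro p q hq hpq
  refine ratNormAt_lowerToeplitz_le_one (hq z hz) (norm_mul_ratDeriv_le_one_sub_sq hz ?_ hq hpq)
  exact fun P Q hQ hPQ hPz =>
    (norm_mul_ratDeriv_le_ratNormAt z c (hQ z hz)).trans (hyp P Q hQ hPQ hPz)

theorem stmt_8 (Ω : Set ℂ) (hΩo : IsOpen Ω) (hΩb : Bornology.IsBounded Ω)
    (z : ℂ) (hzΩ : z ∈ Ω) (c : ℂ)
    (B : Matrix (Fin 2) (Fin 2) ℂ) (hB : B = !![z, 0; c, z])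
    (hyp : ∀ p q : Polynomial ℂ,
      (∀ w ∈ closure Ω, q.eval w ≠ 0) →
      (∀ w ∈ closure Ω, ‖p.eval w / q.eval w‖ ≤ 1) →
      p.eval z = 0 → ratNormAt B p q ≤ 1) :
    ∀ p q : Polynomial ℂ,
      (∀ w ∈ closure Ω, q.eval w ≠ 0) →
      (∀ w ∈ closure Ω, ‖p.eval w / q.eval w‖ ≤ 1) →
      ratNormAt B p q ≤ 1 :=
  stmt_8_general Ω z hzΩ c B hB hyp
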